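/- arXiv:2308.09284 — 4 statements merged into one kernel-verified Lean document; each statement's English description precedes it below -/
import Mathlib

section
/- Let Σ be an alphabet, L ⊆ Σ* a language, and r = r₁r₂⋯r_k ∈ L a word of length k ≥ 2. Let n ≥ 1 and let A, B be n×n Boolean matrices. Define a Σ-labeled digraph H whose vertex set is the disjoint union of layers V₀, …, V_k with V_ℓ = {v₁^(ℓ), …, v_n^(ℓ)}, and whose edges are: (v_i^(0), r₁, v_j^(1)) whenever A[i][j] = 1; (v_j^(i−1), r_i, v_j^(i)) for every j ∈ {1,…,n} and every i ∈ {2,…,k−1}; and (v_i^(k−1), r_k, v_j^(k)) whenever B[i][j] = 1. Then for all i, j ∈ {1,…,n}: the vertex v_j^(k) is L-reachable from v_i^(0) in H if and only if the Boolean matrix product satisfies (A·B)[i][j] = 1, i.e. there exists l ∈ {1,…,n} with A[i][l] = 1 and B[l][j] = 1. -/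
/-- A labeled walk in a `σ`-labeled digraph given by the edge relation `E`:
`LWalk E u w v` means there is a walk from `u` to `v` whose label is the word `w`. -/
inductive LWalk {V σ : Type*} (E : V → σ → V → Prop) : V → List σ → V → Prop
  | nil (v : V) : LWalk E v [] v
  | cons {u v w : V} {c : σ} {l : List σ} :
      E u c v → LWalk E v l w → LWalk E u (c :: l) w

/-- The layered graph encoding Boolean matrix multiplication: a vertex is a pair
(layer, index); layer `0` is `V₀`, ..., layer `k` is `V_k`.  The edges between layer `0`
and layer `1` encode the matrix `A` (labeled `r 0`, i.e. `r₁`), the edges between layer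
`ℓ` and `ℓ+1` for `1 ≤ ℓ ≤ k-2` copy each vertex forward (labeled `r ℓ`), and the edges
between layer `k-1` and layer `k` encode the matrix `B` (labeled `r (k-1)`, i.e. `r_k`). -/
def bmmEdge {σ : Type*} (n k : ℕ) (r : ℕ → σ) (A B : Fin n → Fin n → Bool) :
    ℕ × Fin n → σ → ℕ × Fin n → Prop := fun x c y =>
  (∃ i j : Fin n, A i j = true ∧ x = (0, i) ∧ c = r 0 ∧ y = (1, j)) ∨
  (∃ (ℓ : ℕ) (j : Fin n), 1 ≤ ℓ ∧ ℓ ≤ k - 2 ∧ x = (ℓ, j) ∧ c = r ℓ ∧ y = (ℓ + 1, j)) ∨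
  (∃ i j : Fin n, B i j = true ∧ x = (k - 1, i) ∧ c = r (k - 1) ∧ y = (k, j))

/-!
A walk from layer `0` to layer `k` first takes an `A`-edge from `v_i^(0)` to some `v_l^(1)`.
Between layers `1` and `k - 1` the only edges are the copy edges, which keep the index `l`,
and layer `k` has no outgoing edges, so the walk ends with a `B`-edge from `v_l^(k-1)` to
`v_j^(k)`. Conversely such an `l` gives a walk whose label is exactly `r₁ ⋯ r_k ∈ L`.
-/

theorem LWalk.single {V σ : Type*} {E : V → σ → V → Prop} {u v : V} {c : σ}
    (e : E u c v) : LWalk E u [c] v :=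
  .cons e (.nil v)

theorem LWalk.append {V σ : Type*} {E : V → σ → V → Prop} {u v w : V} {l₁ l₂ : List σ}
    (h₁ : LWalk E u l₁ v) (h₂ : LWalk E v l₂ w) : LWalk E u (l₁ ++ l₂) w := by
  induction h₁ with
  | nil => exact h₂
  | cons e _ ih => exact .cons e (ih h₂)

theorem List.ofFn_eq_cons_map_range'_append {α : Type*} (r : ℕ → α) {k : ℕ} (hk : 2 ≤ k) :
    List.ofFn (fun i : Fin k => r i) = r 0 :: ((List.range' 1 (k - 2)).map r ++ [r (k - 1)]) := by
  have hofFn : List.ofFn (fun i : Fin k => r i) = (List.range k).map r := by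
    apply List.ext_getElem <;> simp
  obtain ⟨m, rfl⟩ := Nat.exists_eq_add_of_le' hk
  rw [hofFn, List.range_eq_range', List.range'_succ, List.range'_concat]
  simp [Nat.add_comm]

section BmmEdge

variable {σ : Type*} {n k : ℕ} {r : ℕ → σ} {A B : Fin n → Fin n → Bool}

theorem bmmEdge_from_zero (hk : 2 ≤ k) {i : Fin n} {c : σ} {y : ℕ × Fin n}
    (e : bmmEdge n k r A B (0, i) c y) : ∃ l, A i l = true ∧ y = (1, l) := by
  rcases e with ⟨_, b, hA, hx, -, rfl⟩ | ⟨ℓ, _, h1, _, hx, -⟩ | ⟨_, _, _, hx, -⟩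
  · obtain ⟨-, rfl⟩ := Prod.mk.inj hx
    exact ⟨b, hA, rfl⟩
  · exact absurd (Prod.mk.inj hx).1 (by omega)
  · exact absurd (Prod.mk.inj hx).1 (by omega)

theorem bmmEdge_from_middle {ℓ : ℕ} (h1 : 1 ≤ ℓ) (h2 : ℓ ≤ k - 2) {m : Fin n} {c : σ}
    {y : ℕ × Fin n} (e : bmmEdge n k r A B (ℓ, m) c y) : y = (ℓ + 1, m) := by
  rcases e with ⟨_, _, _, hx, -⟩ | ⟨_, _, _, _, hx, -, rfl⟩ | ⟨_, _, _, hx, -⟩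
  · exact absurd (Prod.mk.inj hx).1 (by omega)
  · obtain ⟨rfl, rfl⟩ := Prod.mk.inj hx
    rfl
  · exact absurd (Prod.mk.inj hx).1 (by omega)

theorem bmmEdge_from_pred (hk : 2 ≤ k) {m : Fin n} {c : σ} {y : ℕ × Fin n}
    (e : bmmEdge n k r A B (k - 1, m) c y) : ∃ j, B m j = true ∧ y = (k, j) := by
  rcases e with ⟨_, _, _, hx, -⟩ | ⟨ℓ, _, _, h2, hx, -⟩ | ⟨_, b, hB, hx, -, rfl⟩
  · exact absurd (Prod.mk.inj hx).1 (by omega)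
  · exact absurd (Prod.mk.inj hx).1 (by omega)
  · obtain ⟨-, rfl⟩ := Prod.mk.inj hx
    exact ⟨b, hB, rfl⟩

theorem not_bmmEdge_from_top (hk : 0 < k) {m : Fin n} {c : σ} {y : ℕ × Fin n} :
    ¬ bmmEdge n k r A B (k, m) c y := by
  rintro (⟨_, _, _, hx, -⟩ | ⟨ℓ, _, _, h2, hx, -⟩ | ⟨_, _, _, hx, -⟩) <;>
  · exact absurd (Prod.mk.inj hx).1 (by omega)

theorem LWalk.bmmEdge_top_eq (hk : 0 < k) {p j : Fin n} {w : List σ}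
    (h : LWalk (bmmEdge n k r A B) (k, p) w (k, j)) : p = j := by
  cases h with
  | nil => rfl
  | cons e _ => exact absurd e (not_bmmEdge_from_top hk)

theorem LWalk.bmmEdge_B_of_middle {j : Fin n} (w : List σ) :
    ∀ (ℓ : ℕ) (m : Fin n), 1 ≤ ℓ → ℓ ≤ k - 1 →
      LWalk (bmmEdge n k r A B) (ℓ, m) w (k, j) → B m j = true := by
  induction w with
  | nil =>
    rintro ℓ m h1 h2 ⟨⟩
    omega
  | cons c t ih =>
    rintro ℓ m h1 h2 (_ | ⟨e, h⟩)
    by_cases hℓ : ℓ ≤ k - 2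
    · rw [bmmEdge_from_middle h1 hℓ e] at h
      exact ih (ℓ + 1) m (by omega) (by omega) h
    · obtain rfl : ℓ = k - 1 := by omega
      obtain ⟨j', hB, rfl⟩ := bmmEdge_from_pred (by omega) e
      rwa [← LWalk.bmmEdge_top_eq (by omega) h]

theorem LWalk.bmmEdge_copy (m : Fin n) (d : ℕ) :
    ∀ ℓ : ℕ, 1 ≤ ℓ → ℓ + d ≤ k - 1 →
      LWalk (bmmEdge n k r A B) (ℓ, m) ((List.range' ℓ d).map r) (ℓ + d, m) := by
  induction d with
  | zero => exact fun ℓ _ _ => .nil _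
  | succ d ih =>
    intro ℓ h1 h2
    rw [List.range'_succ, List.map_cons, show ℓ + (d + 1) = ℓ + 1 + d by omega]
    exact .cons (Or.inr (Or.inl ⟨ℓ, m, h1, by omega, rfl, rfl, rfl⟩))
      (ih (ℓ + 1) (by omega) (by omega))

end BmmEdge

theorem stmt1_general {σ : Type*} (L : Set (List σ)) (k : ℕ) (hk : 2 ≤ k) (r : ℕ → σ)
    (hr : (List.ofFn fun i : Fin k => r i) ∈ L)
    (n : ℕ) (A B : Fin n → Fin n → Bool) (i j : Fin n) :
    (∃ w ∈ L, LWalk (bmmEdge n k r A B) (0, i) w (k, j)) ↔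
      ∃ l : Fin n, A i l = true ∧ B l j = true := by
  constructor
  · rintro ⟨_, -, _ | ⟨e, h⟩⟩
    · omega
    · obtain ⟨l, hA, rfl⟩ := bmmEdge_from_zero hk e
      exact ⟨l, hA, LWalk.bmmEdge_B_of_middle _ 1 l le_rfl (by omega) h⟩
  · rintro ⟨l, hA, hB⟩
    refine ⟨_, hr, ?_⟩
    rw [List.ofFn_eq_cons_map_range'_append r hk]
    have hcopy : LWalk (bmmEdge n k r A B) (1, l) ((List.range' 1 (k - 2)).map r) (k - 1, l) := by
      convert LWalk.bmmEdge_copy (k := k) l (k - 2) 1 le_rfl (by omega) using 2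
      omega
    exact .cons (Or.inl ⟨i, l, hA, rfl, rfl, rfl⟩)
      (hcopy.append (.single (Or.inr (Or.inr ⟨l, j, hB, rfl, rfl, rfl⟩))))

/-- In the layered graph, `v_j^(k)` is `L`-reachable from `v_i^(0)` iff the Boolean
matrix product of `A` and `B` has a `1` in entry `(i, j)`. -/
theorem stmt1 {σ : Type*} (L : Set (List σ)) (k : ℕ) (hk : 2 ≤ k) (r : ℕ → σ)
    (hr : (List.ofFn fun i : Fin k => r i) ∈ L)
    (n : ℕ) (hn : 1 ≤ n) (A B : Fin n → Fin n → Bool) (i j : Fin n) :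
    (∃ w ∈ L, LWalk (bmmEdge n k r A B) (0, i) w (k, j)) ↔
      ∃ l : Fin n, A i l = true ∧ B l j = true :=
  stmt1_general L k hk r hr n A B i j
end

section
/- Let Σ be an alphabet, L ⊆ Σ* a language, and r = r₁r₂⋯r_k ∈ L a word of length k ≥ 2. Fix n ≥ 1 and j* ∈ {1,…,n}. Define the Σ-labeled digraph H whose vertex set is the disjoint union of layers V₀, …, V_k with V_ℓ = {v₁^(ℓ), …, v_n^(ℓ)}, and whose edges are: (v_i^(0), r₁, v_{j*}^(1)) for all i ∈ {1,…,n}; (v_j^(i−1), r_i, v_j^(i)) for all j ∈ {1,…,n} and all i ∈ {2,…,k−1}; and (v_{j*}^(k−1), r_k, v_i^(k)) for all i ∈ {1,…,n}. Then H has exactly k·n edges, and for every pair i, j ∈ {1,…,n} the vertex v_j^(k) is L-reachable from v_i^(0) in H; in particular the set of L-reachable pairs in V₀ × V_k has size n². -/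
/-- The set of labeled edges of the layered graph `H` with hub vertex `jstar`:
every vertex of layer `0` has an edge (labeled `r 0 = r₁`) to the hub of layer `1`,
layers `ℓ → ℓ+1` for `1 ≤ ℓ ≤ k-2` copy each of the `n` vertices forward
(labeled `r ℓ`), and the hub of layer `k-1` has an edge (labeled `r (k-1) = r_k`)
to every vertex of layer `k`. -/
def hubEdgeSet {σ : Type*} (n k : ℕ) (jstar : Fin n) (r : ℕ → σ) :
    Set ((ℕ × Fin n) × σ × (ℕ × Fin n)) :=
  {e | (∃ i : Fin n, e = ((0, i), r 0, (1, jstar))) ∨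
       (∃ (ℓ : ℕ) (j : Fin n), 1 ≤ ℓ ∧ ℓ ≤ k - 2 ∧ e = ((ℓ, j), r ℓ, (ℓ + 1, j))) ∨
       (∃ i : Fin n, e = ((k - 1, jstar), r (k - 1), (k, i)))}

/-- The corresponding edge relation. -/
def hubEdge {σ : Type*} (n k : ℕ) (jstar : Fin n) (r : ℕ → σ) :
    ℕ × Fin n → σ → ℕ × Fin n → Prop := fun x c y => (x, c, y) ∈ hubEdgeSet n k jstar r

/-!
Every walk from `v_i^(0)` to `v_j^(k)` along the hub column `v_{j*}^(1), …, v_{j*}^(k-1)` is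
labeled `r₁ ⋯ r_k ∈ L`, so all `n²` pairs are reachable. The `k·n` edges are enumerated by
`Fin k × Fin n`: layer `ℓ` contributes one edge per vertex of `V_ℓ`, or of `V_k` when `ℓ = k - 1`.
-/

lemma LWalk.ofFn {V σ : Type*} {E : V → σ → V → Prop} {m : ℕ} (p : ℕ → V) (r : ℕ → σ)
    (h : ∀ t < m, E (p t) (r t) (p (t + 1))) :
    LWalk E (p 0) (List.ofFn fun i : Fin m => r i) (p m) := by
  induction m generalizing p r with
  | zero => simpa using LWalk.nil (p 0)
  | succ m ih =>
    simpa [List.ofFn_succ] using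
      LWalk.cons (h 0 m.succ_pos) (ih (fun t => p (t + 1)) (fun t => r (t + 1))
        fun t ht => h (t + 1) (by omega))

section Hub

variable {σ : Type*} {n k : ℕ} (jstar : Fin n) (r : ℕ → σ)

lemma hubEdge_walk (hk : 2 ≤ k) (i j : Fin n) :
    LWalk (hubEdge n k jstar r) (0, i) (List.ofFn fun t : Fin k => r t) (k, j) := by
  let p : ℕ → ℕ × Fin n := fun t =>
    if t = 0 then (0, i) else if t = k then (k, j) else (t, jstar)
  have hwalk := LWalk.ofFn (E := hubEdge n k jstar r) (m := k) p r fun t ht => by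
    simp only [hubEdge, hubEdgeSet, Set.mem_ofPred_eq, p]
    rcases Nat.eq_zero_or_pos t with rfl | ht0
    · exact Or.inl ⟨i, by simp [show 1 ≠ k by omega]⟩
    by_cases htk : t = k - 1
    · subst htk
      exact Or.inr (Or.inr ⟨j, by simp [show k - 1 ≠ 0 by omega, show k - 1 ≠ k by omega,
        show k - 1 + 1 = k by omega, show k ≠ 0 by omega]⟩)
    · exact Or.inr (Or.inl ⟨t, jstar, ht0, by omega,
        by simp [show t ≠ 0 by omega, show t ≠ k by omega, show t + 1 ≠ k by omega]⟩)
  simpa [p, show k ≠ 0 by omega] using hwalk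

def hubEdgeEnum (q : Fin k × Fin n) : (ℕ × Fin n) × σ × (ℕ × Fin n) :=
  if (q.1 : ℕ) = 0 then ((0, q.2), r 0, (1, jstar))
  else if (q.1 : ℕ) = k - 1 then ((k - 1, jstar), r (k - 1), (k, q.2))
  else ((q.1, q.2), r q.1, (q.1 + 1, q.2))

lemma hubEdgeEnum_injective (hk : 2 ≤ k) :
    Function.Injective (hubEdgeEnum (k := k) jstar r) := by
  rintro ⟨⟨a, ha⟩, a'⟩ ⟨⟨b, hb⟩, b'⟩ h
  simp only [hubEdgeEnum] at h
  split_ifs at h <;> simp only [Prod.mk.injEq] at h <;> ext <;> simp <;> omega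

lemma range_hubEdgeEnum (hk : 2 ≤ k) :
    Set.range (hubEdgeEnum (k := k) jstar r) = hubEdgeSet n k jstar r := by
  ext e
  constructor
  · rintro ⟨⟨⟨t, ht⟩, i⟩, rfl⟩
    simp only [hubEdgeEnum, hubEdgeSet, Set.mem_ofPred_eq]
    split_ifs with h0 hlast
    · exact Or.inl ⟨i, by simp⟩
    · exact Or.inr (Or.inr ⟨i, rfl⟩)
    · exact Or.inr (Or.inl ⟨t, i, by omega, by omega, rfl⟩)
  · rintro (⟨i, rfl⟩ | ⟨ℓ, j, hℓ1, hℓk, rfl⟩ | ⟨i, rfl⟩)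
    · exact ⟨(⟨0, by omega⟩, i), by simp [hubEdgeEnum]⟩
    · exact ⟨(⟨ℓ, by omega⟩, j),
        by simp [hubEdgeEnum, show ℓ ≠ 0 by omega, show ℓ ≠ k - 1 by omega]⟩
    · exact ⟨(⟨k - 1, by omega⟩, i), by simp [hubEdgeEnum]; omega⟩

lemma ncard_hubEdgeSet (hk : 2 ≤ k) : (hubEdgeSet n k jstar r).ncard = k * n := by
  rw [← range_hubEdgeEnum jstar r hk, ← Nat.card_coe_set_eq,
    Nat.card_range_of_injective (hubEdgeEnum_injective jstar r hk)]
  simp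

end Hub

theorem stmt2_general {σ : Type*} (L : Set (List σ)) (k : ℕ) (hk : 2 ≤ k) (r : ℕ → σ)
    (hr : (List.ofFn fun i : Fin k => r i) ∈ L)
    (n : ℕ) (jstar : Fin n) :
    (hubEdgeSet n k jstar r).ncard = k * n ∧
    (∀ i j : Fin n, ∃ w ∈ L, LWalk (hubEdge n k jstar r) (0, i) w (k, j)) ∧
    {p : Fin n × Fin n |
      ∃ w ∈ L, LWalk (hubEdge n k jstar r) (0, p.1) w (k, p.2)}.ncard = n ^ 2 := by
  have reach (i j : Fin n) : ∃ w ∈ L, LWalk (hubEdge n k jstar r) (0, i) w (k, j) :=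
    ⟨_, hr, hubEdge_walk jstar r hk i j⟩
  refine ⟨ncard_hubEdgeSet jstar r hk, reach, ?_⟩
  simp [reach, sq]

/-- The hub graph has exactly `k·n` edges, every vertex of layer `k` is `L`-reachable from
every vertex of layer `0`, and hence the set of `L`-reachable pairs in `V₀ × V_k` has
size `n²`. -/
theorem stmt2 {σ : Type*} (L : Set (List σ)) (k : ℕ) (hk : 2 ≤ k) (r : ℕ → σ)
    (hr : (List.ofFn fun i : Fin k => r i) ∈ L)
    (n : ℕ) (hn : 1 ≤ n) (jstar : Fin n) :
    (hubEdgeSet n k jstar r).ncard = k * n ∧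
    (∀ i j : Fin n, ∃ w ∈ L, LWalk (hubEdge n k jstar r) (0, i) w (k, j)) ∧
    {p : Fin n × Fin n |
      ∃ w ∈ L, LWalk (hubEdge n k jstar r) (0, p.1) w (k, p.2)}.ncard = n ^ 2 :=
  stmt2_general L k hk r hr n jstar
end

section
/- Let s = s₁s₂⋯s_p be a fixed nonempty word over an alphabet Σ containing the letters a and b. Let G be a 3-partite undirected graph with parts A = {a₁,…,aₙ}, B = {b₁,…,bₙ}, C = {c₁,…,cₙ} and edge set E. Construct a Σ-labeled digraph H with vertex set A ∪ B ∪ C ∪ A' (A' = {a₁',…,aₙ'} fresh) plus, for each edge {b_i, c_j} ∈ E, p−1 fresh intermediate vertices, and with the following labeled edges: (a_i, a_{i+1}) for 1 ≤ i ≤ n−1, each labeled a; (a_i, b_j) labeled a for every edge {a_i, b_j} ∈ E; for every edge {b_i, c_j} ∈ E, a fresh directed path of p edges from b_i to c_j whose consecutive edge labels are s₁, s₂, …, s_p; (c_i, a_j') labeled b for every edge {c_i, a_j} ∈ E; and (a_{i+1}', a_i') for 1 ≤ i ≤ n−1, each labeled b. Then there is a walk from a₁ to a₁' in H whose label belongs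 to the language {aⁱ s bⁱ : i ∈ ℕ} if and only if G contains a triangle, i.e. there exist i, j, l such that {a_i, b_j}, {b_j, c_l}, {c_l, a_i} are all edges of G. -/
/-- Vertices of the constructed graph `H`: the copies `A`, `B`, `C` of the parts,
the fresh copies `A' = {a₁',…,aₙ'}`, and for each pair `(i, j)` the fresh intermediate
vertices `vMid i j t` (`t = 1,…,p−1`) of the path spelling `s` from `b_i` to `c_j`. -/
inductive Vtx (n : ℕ) where
  | vA : Fin n → Vtx n
  | vB : Fin n → Vtx n
  | vC : Fin n → Vtx n
  | vA' : Fin n → Vtx n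
  | vMid : Fin n → Fin n → ℕ → Vtx n

/-- The `t`-th node (`t = 0,…,p`) of the path of length `p` from `b_i` to `c_j`. -/
def midNode (n p : ℕ) (i j : Fin n) (t : ℕ) : Vtx n :=
  if t = 0 then Vtx.vB i else if p ≤ t then Vtx.vC j else Vtx.vMid i j t

/-- The labeled edges of `H`, where the tripartite graph `G` is given by the relations
`EAB`, `EBC`, `ECA` describing its edges between the respective parts
(vertices are 0-indexed, so `a₁` is `Vtx.vA ⟨0, _⟩`), `a b : σ` are the two
distinguished letters and the fixed word `s₁⋯s_p` is given by `s : ℕ → σ`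
(`s 0 = s₁, …, s (p-1) = s_p`). -/
def triEdge {σ : Type*} {n : ℕ} (p : ℕ) (a b : σ) (s : ℕ → σ)
    (EAB EBC ECA : Fin n → Fin n → Prop) :
    Vtx n → σ → Vtx n → Prop := fun x c y =>
  (∃ (i : ℕ) (h : i + 1 < n),
      x = Vtx.vA ⟨i, by omega⟩ ∧ c = a ∧ y = Vtx.vA ⟨i + 1, h⟩) ∨
  (∃ i j : Fin n, EAB i j ∧ x = Vtx.vA i ∧ c = a ∧ y = Vtx.vB j) ∨
  (∃ (i j : Fin n) (t : ℕ), EBC i j ∧ t < p ∧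
      x = midNode n p i j t ∧ c = s t ∧ y = midNode n p i j (t + 1)) ∨
  (∃ i j : Fin n, ECA i j ∧ x = Vtx.vC i ∧ c = b ∧ y = Vtx.vA' j) ∨
  (∃ (i : ℕ) (h : i + 1 < n),
      x = Vtx.vA' ⟨i + 1, h⟩ ∧ c = b ∧ y = Vtx.vA' ⟨i, by omega⟩)

theorem LWalk.nil_iff {V σ : Type*} {E : V → σ → V → Prop} {u v : V} :
    LWalk E u [] v ↔ u = v :=
  ⟨fun h => by cases h; rfl, fun h => h ▸ .nil u⟩

theorem LWalk.cons_iff {V σ : Type*} {E : V → σ → V → Prop} {u w : V} {c : σ} {l : List σ} :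
    LWalk E u (c :: l) w ↔ ∃ v, E u c v ∧ LWalk E v l w :=
  ⟨fun h => by cases h with | cons he hw => exact ⟨_, he, hw⟩,
    fun ⟨_, he, hw⟩ => .cons he hw⟩

theorem List.replicate_append_append_replicate_inj {σ : Type*} {a b : σ} (hab : a ≠ b)
    {S : List σ} {m m' k k' : ℕ} :
    replicate m a ++ S ++ replicate m' b = replicate k a ++ S ++ replicate k' b ↔
      m = k ∧ m' = k' := by
  classical
  refine ⟨fun h => ⟨?_, ?_⟩, by rintro ⟨rfl, rfl⟩; rfl⟩
  · simpa [count_replicate, hab, hab.symm] using congrArg (count a) h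
  · simpa [count_replicate, hab, hab.symm] using congrArg (count b) h

section midNode
variable {n p : ℕ} {i j i' j' : Fin n} {t t' : ℕ}

theorem vB_eq_midNode : Vtx.vB i' = midNode n p i j t ↔ t = 0 ∧ i' = i := by
  unfold midNode; split_ifs <;> simp [*]

theorem vC_eq_midNode : Vtx.vC j' = midNode n p i j t ↔ t ≠ 0 ∧ p ≤ t ∧ j' = j := by
  unfold midNode; split_ifs <;> simp [*]

theorem vMid_eq_midNode :
    Vtx.vMid i' j' t' = midNode n p i j t ↔ t ≠ 0 ∧ t < p ∧ i' = i ∧ j' = j ∧ t' = t := by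
  unfold midNode; split_ifs <;> grind

theorem midNode_of_lt (ht : 0 < t) (htp : t < p) : midNode n p i j t = .vMid i j t := by
  simp [midNode, ht.ne', htp.not_ge]

theorem midNode_of_le (ht : 0 < t) (hpt : p ≤ t) : midNode n p i j t = .vC j := by
  simp [midNode, ht.ne', hpt]

theorem vA_ne_midNode {k : Fin n} : Vtx.vA k ≠ midNode n p i j t := by
  unfold midNode; split_ifs <;> simp

theorem vA'_ne_midNode {k : Fin n} : Vtx.vA' k ≠ midNode n p i j t := by
  unfold midNode; split_ifs <;> simp

end midNode

theorem List.drop_ofFn_eq_cons {σ : Type*} {p t : ℕ} {f : Fin p → σ} (ht : t < p) :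
    (ofFn f).drop t = f ⟨t, ht⟩ :: (ofFn f).drop (t + 1) := by
  rw [drop_eq_getElem_cons (by simpa using ht)]
  simp

section triEdge
variable {σ : Type*} {n : ℕ} (hn : 0 < n) {p : ℕ} {a b : σ} {s : ℕ → σ}
  {EAB EBC ECA : Fin n → Fin n → Prop} {c : σ} {y : Vtx n}

local notation "𝓗" => triEdge p a b s EAB EBC ECA
local notation "𝓢" => List.ofFn fun t : Fin p => s t

theorem triEdge_vA_iff {k : Fin n} : 𝓗 (.vA k) c y ↔
    c = a ∧ ((∃ h : k.1 + 1 < n, y = .vA ⟨k + 1, h⟩) ∨ ∃ j, EAB k j ∧ y = .vB j) := by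
  grind [triEdge, vA_ne_midNode]

theorem triEdge_vB_iff {j : Fin n} : 𝓗 (.vB j) c y ↔
    0 < p ∧ c = s 0 ∧ ∃ l, EBC j l ∧ y = midNode n p j l 1 := by
  refine ⟨?_, fun ⟨hp, hc, l, hjl, hy⟩ => .inr (.inr (.inl ⟨j, l, 0, hjl, hp, rfl, hc, hy⟩))⟩
  grind [triEdge, vB_eq_midNode]

theorem triEdge_vMid_iff {j l : Fin n} {t : ℕ} : 𝓗 (.vMid j l t) c y ↔
    EBC j l ∧ 0 < t ∧ t < p ∧ c = s t ∧ y = midNode n p j l (t + 1) := by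
  grind [triEdge, vMid_eq_midNode]

theorem triEdge_vC_iff {l : Fin n} : 𝓗 (.vC l) c y ↔ c = b ∧ ∃ k, ECA l k ∧ y = .vA' k := by
  grind [triEdge, vC_eq_midNode]

theorem triEdge_vA'_iff {k : Fin n} : 𝓗 (.vA' k) c y ↔
    c = b ∧ ∃ h : 0 < k.1, y = .vA' ⟨k - 1, by omega⟩ := by
  grind [triEdge, vA'_ne_midNode]

theorem lWalk_vA'_iff {k : Fin n} {w : List σ} :
    LWalk 𝓗 (.vA' k) w (.vA' ⟨0, hn⟩) ↔ w = List.replicate k b := by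
  induction w generalizing k with
  | nil =>
    simp only [LWalk.nil_iff, Vtx.vA'.injEq, Fin.ext_iff, eq_comm (a := ([] : List σ)),
      List.replicate_eq_nil_iff]
  | cons c w ih =>
    obtain ⟨k, hk⟩ := k
    cases k with
    | zero => simp [LWalk.cons_iff, triEdge_vA'_iff]
    | succ k => simp [LWalk.cons_iff, triEdge_vA'_iff, ih, List.replicate_succ]

theorem lWalk_vC_iff {l : Fin n} {w : List σ} :
    LWalk 𝓗 (.vC l) w (.vA' ⟨0, hn⟩) ↔ ∃ k : Fin n, ECA l k ∧ w = List.replicate (k + 1) b := by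
  cases w with
  | nil => simp [LWalk.nil_iff]
  | cons c w =>
    simp only [LWalk.cons_iff, triEdge_vC_iff, ↓existsAndEq, and_true, lWalk_vA'_iff hn,
      List.replicate_succ, List.cons.injEq]
    exact ⟨fun ⟨k, ⟨hc, hk⟩, hw⟩ => ⟨k, hk, hc, hw⟩, fun ⟨k, hk, hc, hw⟩ => ⟨k, ⟨hc, hk⟩, hw⟩⟩

theorem lWalk_midNode_iff {j l : Fin n} (hjl : EBC j l) {t : ℕ} (ht : 0 < t) (htp : t ≤ p)
    {w : List σ} :
    LWalk 𝓗 (midNode n p j l t) w (.vA' ⟨0, hn⟩) ↔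
      ∃ k : Fin n, ECA l k ∧ w = List.drop t 𝓢 ++ List.replicate (k + 1) b := by
  rcases htp.lt_or_eq with htp | rfl
  · rw [midNode_of_lt ht htp, List.drop_ofFn_eq_cons htp]
    cases w with
    | nil => simp [LWalk.nil_iff]
    | cons c w =>
      simp only [LWalk.cons_iff, triEdge_vMid_iff, hjl, ht, htp, true_and, ↓existsAndEq, and_true,
        lWalk_midNode_iff hjl (Nat.succ_pos t) htp, List.cons_append, List.cons.injEq]
      exact ⟨fun ⟨hc, k, hk, hw⟩ => ⟨k, hk, hc, hw⟩, fun ⟨k, hk, hc, hw⟩ => ⟨hc, k, hk, hw⟩⟩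
  · simp [midNode_of_le ht le_rfl, lWalk_vC_iff hn, List.drop_eq_nil_of_le]
termination_by p - t

theorem lWalk_vB_iff (hp : 0 < p) {j : Fin n} {w : List σ} :
    LWalk 𝓗 (.vB j) w (.vA' ⟨0, hn⟩) ↔
      ∃ l k : Fin n, EBC j l ∧ ECA l k ∧ w = 𝓢 ++ List.replicate (k + 1) b := by
  cases w with
  | nil => simp [LWalk.nil_iff]
  | cons c w =>
    rw [← List.drop_zero (l := 𝓢), List.drop_ofFn_eq_cons hp]
    simp only [LWalk.cons_iff, triEdge_vB_iff, hp, true_and]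
    constructor
    · rintro ⟨_, ⟨rfl, l, hjl, rfl⟩, hw⟩
      obtain ⟨k, hk, rfl⟩ := (lWalk_midNode_iff hn hjl one_pos hp).1 hw
      exact ⟨l, k, hjl, hk, rfl⟩
    · rintro ⟨l, k, hjl, hk, hw⟩
      simp only [List.cons_append, List.cons.injEq] at hw
      exact ⟨_, ⟨hw.1, l, hjl, rfl⟩, (lWalk_midNode_iff hn hjl one_pos hp).2 ⟨k, hk, hw.2⟩⟩

theorem lWalk_vA_iff (hp : 0 < p) {k : Fin n} {w : List σ} :
    LWalk 𝓗 (.vA k) w (.vA' ⟨0, hn⟩) ↔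
      ∃ i j l m : Fin n, k ≤ i ∧ EAB i j ∧ EBC j l ∧ ECA l m ∧
        w = List.replicate ((i : ℕ) - k + 1) a ++ 𝓢 ++ List.replicate (m + 1) b := by
  cases w with
  | nil => simp [LWalk.nil_iff]
  | cons c w =>
    simp only [LWalk.cons_iff, triEdge_vA_iff]
    constructor
    · rintro ⟨_, ⟨hc, ⟨hk, rfl⟩ | ⟨j, hkj, rfl⟩⟩, hw⟩ <;> subst c
      · obtain ⟨i, j, l, m, hki, hij, hjl, hlm, rfl⟩ := (lWalk_vA_iff hp).1 hw
        refine ⟨i, j, l, m, (Nat.le_succ _).trans hki, hij, hjl, hlm, ?_⟩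
        rw [show (i : ℕ) - k + 1 = (i - (k + 1) + 1) + 1 by have : (k : ℕ) + 1 ≤ i := hki; omega]
        simp [List.replicate_succ]
      · obtain ⟨l, m, hjl, hlm, rfl⟩ := (lWalk_vB_iff hn hp).1 hw
        exact ⟨k, j, l, m, le_rfl, hkj, hjl, hlm, by simp⟩
    · rintro ⟨i, j, l, m, hki, hij, hjl, hlm, hw⟩
      rw [List.replicate_succ, List.cons_append, List.cons_append, List.cons.injEq] at hw
      obtain ⟨hc, rfl⟩ := hw
      subst c
      rcases hki.lt_or_eq with hki | rfl
      · have hk : (k : ℕ) + 1 < n := by omega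
        refine ⟨_, ⟨rfl, .inl ⟨hk, rfl⟩⟩, (lWalk_vA_iff hp).2 ⟨i, j, l, m, hki, hij, hjl, hlm, ?_⟩⟩
        rw [show (i : ℕ) - k = i - (k + 1) + 1 by omega]
      · exact ⟨_, ⟨rfl, .inr ⟨j, hij, rfl⟩⟩, (lWalk_vB_iff hn hp).2 ⟨l, m, hjl, hlm, by simp⟩⟩
termination_by n - k

end triEdge

/-- There is a walk from `a₁` to `a₁'` in `H` whose label belongs to the language
`{aⁱ s bⁱ : i ∈ ℕ}` iff `G` has a triangle. -/
theorem stmt9 {σ : Type*} {n : ℕ} (hn : 0 < n) (a b : σ) (hab : a ≠ b)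
    (p : ℕ) (hp : 1 ≤ p) (s : ℕ → σ)
    (EAB EBC ECA : Fin n → Fin n → Prop) :
    (∃ w : List σ,
        (∃ i : ℕ, w = List.replicate i a ++ (List.ofFn fun t : Fin p => s t) ++
          List.replicate i b) ∧
        LWalk (triEdge p a b s EAB EBC ECA) (Vtx.vA ⟨0, hn⟩) w (Vtx.vA' ⟨0, hn⟩)) ↔
      ∃ i j l : Fin n, EAB i j ∧ EBC j l ∧ ECA l i := by
  simp only [lWalk_vA_iff hn hp]
  constructor
  · rintro ⟨w, ⟨m, rfl⟩, i, j, l, k, -, hij, hjl, hlk, hw⟩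
    obtain ⟨hmi, hmk⟩ := (List.replicate_append_append_replicate_inj hab).1 hw
    obtain rfl : i = k := Fin.ext (by omega)
    exact ⟨i, j, l, hij, hjl, hlk⟩
  · rintro ⟨i, j, l, hij, hjl, hli⟩
    exact ⟨_, ⟨i + 1, rfl⟩, i, j, l, i, Nat.zero_le _, hij, hjl, hli, by simp⟩
end

section
/- Let Σ be an alphabet, α ∈ Σ, and L ⊆ Σ* a language; define the right quotient L/α = {w ∈ Σ* : wα ∈ L}. Let G be a Σ-labeled digraph with vertex set V, and let G' be obtained from G by adding, for every vertex v ∈ V, a fresh vertex t_v and the labeled edge (v, α, t_v). Then for all vertices u, v ∈ V: the vertex t_v is L-reachable from u in G' if and only if v is (L/α)-reachable from u in G. -/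
/-- The edges of the graph `G'` obtained from `G` (vertex set `V`, edge relation `E`)
by adding, for every vertex `v`, a fresh vertex `t_v = Sum.inr v` together with the
edge `(v, α, t_v)`.  Original vertices are embedded as `Sum.inl`. -/
def quotEdge {S V : Type*} (E : V → S → V → Prop) (α : S) :
    V ⊕ V → S → V ⊕ V → Prop := fun x c y =>
  (∃ u w : V, E u c w ∧ x = Sum.inl u ∧ y = Sum.inl w) ∨
  (∃ v : V, x = Sum.inl v ∧ c = α ∧ y = Sum.inr v)

/-! The fresh vertex `t_v` is a sink reached only by an `α`-edge from `v`, so a walk from `u`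
to `t_v` is a walk from `u` to `v` in `G` followed by that edge. -/

namespace LWalk

variable {V σ : Type*} {E : V → σ → V → Prop}

theorem nil_iff_s11 {u v : V} : LWalk E u [] v ↔ u = v := by
  constructor
  · rintro ⟨⟩
    rfl
  · rintro rfl
    exact .nil u

theorem cons_iff_s11 {u w : V} {c : σ} {l : List σ} :
    LWalk E u (c :: l) w ↔ ∃ v, E u c v ∧ LWalk E v l w := by
  constructor
  · rintro (_ | ⟨hc, hl⟩)
    exact ⟨_, hc, hl⟩
  · rintro ⟨v, hc, hl⟩
    exact .cons hc hl

theorem append_iff {u w : V} {l₁ l₂ : List σ} :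
    LWalk E u (l₁ ++ l₂) w ↔ ∃ v, LWalk E u l₁ v ∧ LWalk E v l₂ w := by
  induction l₁ generalizing u with
  | nil => simp [nil_iff_s11]
  | cons c l₁ ih =>
    simp only [List.cons_append, cons_iff_s11, ih]
    exact ⟨fun ⟨v, hc, m, h₁, h₂⟩ => ⟨m, ⟨v, hc, h₁⟩, h₂⟩,
      fun ⟨m, ⟨v, hc, h₁⟩, h₂⟩ => ⟨v, hc, m, h₁, h₂⟩⟩

theorem singleton_iff {u w : V} {c : σ} : LWalk E u [c] w ↔ E u c w := by
  simp [cons_iff_s11, nil_iff_s11]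

theorem iff_of_forall_not_edge {u w : V} {l : List σ} (hu : ∀ c v, ¬ E u c v) :
    LWalk E u l w ↔ l = [] ∧ w = u := by
  cases l with
  | nil => simp [nil_iff_s11, eq_comm]
  | cons c l => simp [cons_iff_s11, hu]

end LWalk

section quotEdge

variable {S V : Type*} {E : V → S → V → Prop} {α : S}

open Sum

@[simp]
theorem quotEdge_inl_inl {u w : V} {c : S} : quotEdge E α (inl u) c (inl w) ↔ E u c w := by
  simp [quotEdge]

@[simp]
theorem quotEdge_inl_inr {u v : V} {c : S} :
    quotEdge E α (inl u) c (inr v) ↔ c = α ∧ u = v := by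
  simp [quotEdge, eq_comm]

@[simp]
theorem not_quotEdge_inr {v : V} {c : S} {y : V ⊕ V} : ¬ quotEdge E α (inr v) c y := by
  simp [quotEdge]

theorem lWalk_quotEdge_inl_inl {u v : V} {l : List S} :
    LWalk (quotEdge E α) (inl u) l (inl v) ↔ LWalk E u l v := by
  induction l generalizing u with
  | nil => simp [LWalk.nil_iff_s11]
  | cons c l ih =>
    have dead_end (m : V) : ¬ LWalk (quotEdge E α) (inr m) l (inl v) := by
      simp [LWalk.iff_of_forall_not_edge (fun _ _ => not_quotEdge_inr)]
    simp [LWalk.cons_iff_s11, Sum.exists, ih, dead_end]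

theorem lWalk_quotEdge_inl_inr {u v : V} {l : List S} :
    LWalk (quotEdge E α) (inl u) l (inr v) ↔ ∃ w, l = w ++ [α] ∧ LWalk E u w v := by
  rcases l.eq_nil_or_concat' with rfl | ⟨w, c, rfl⟩
  · simp [LWalk.nil_iff_s11]
  · simp [LWalk.append_iff, LWalk.singleton_iff, Sum.exists, lWalk_quotEdge_inl_inl, and_comm]

end quotEdge

/-- For all original vertices `u, v`: the fresh vertex `t_v` is `L`-reachable from `u`
in `G'` iff `v` is `L/α`-reachable from `u` in `G`, where `L/α = {w : wα ∈ L}`. -/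
theorem stmt11 {S V : Type*} (E : V → S → V → Prop) (α : S) (L : Set (List S))
    (u v : V) :
    (∃ w ∈ L, LWalk (quotEdge E α) (Sum.inl u) w (Sum.inr v)) ↔
      ∃ w ∈ {w : List S | w ++ [α] ∈ L}, LWalk E u w v := by
  simp only [lWalk_quotEdge_inl_inr, Set.mem_ofPred_eq]
  constructor
  · rintro ⟨_, hL, w, rfl, hw⟩
    exact ⟨w, hL, hw⟩
  · rintro ⟨w, hL, hw⟩
    exact ⟨_, hL, w, rfl, hw⟩
end
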